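/- arXiv:1406.3745 — 8 statements merged into one kernel-verified Lean document; each statement's English description precedes it below -/
import Mathlib

section
/- Let b_1, …, b_m be pairwise coprime integers ≥ 2 and let b' ∈ ℕ be not divisible by any of b_1, …, b_m. Then there exists a set A ⊂ ℕ with |A| = b' such that A is {b_1,…,b_m}-admissible (i.e. for each j, A mod b_j omits at least one residue class) but A is not {b'}-admissible (i.e. A mod b' covers all residue classes mod b'). -/
/-!
Send each `k < b'` to a number `x_k = k + b' y_k`, where the Chinese remainder theorem gives `y_k`
with `y_k ≡ 0 (mod b_j)` when `b_j ∤ k` and `y_k ≡ 1 (mod b_j)` when `b_j ∣ k`. Then `x_k ≡ k`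
modulo `b'`, so the `x_k` are distinct and cover every residue mod `b'`, while modulo `b_j` the
number `x_k` is `≡ k ≢ 0` or `≡ b' ≢ 0`: the class of `0` is missed modulo every `b_j`.
-/

open Finset Function

section

variable {ι : Type*} [Fintype ι] {b : ι → ℕ}

theorem exists_natCast_eq_of_pairwise_coprime (hb : ∀ i, b i ≠ 0)
    (hcop : Pairwise (Nat.Coprime on b)) (r : ∀ i, ZMod (b i)) :
    ∃ y : ℕ, ∀ i, (y : ZMod (b i)) = r i := by
  have : NeZero (∏ i, b i) := ⟨prod_ne_zero_iff.mpr fun i _ => hb i⟩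
  refine ⟨((ZMod.prodEquivPi b hcop).symm r).val, fun i => ?_⟩
  have hr := ZMod.prodEquivPi_apply b hcop ((ZMod.prodEquivPi b hcop).symm r) i
  rw [RingEquiv.apply_symm_apply, ZMod.castHom_apply] at hr
  rw [ZMod.natCast_val, hr]

theorem exists_natCast_eq_and_natCast_ne_zero (hb : ∀ i, b i ≠ 0)
    (hcop : Pairwise (Nat.Coprime on b)) {n : ℕ} (hn : ∀ i, ¬ b i ∣ n) (k : ℕ) :
    ∃ x : ℕ, (x : ZMod n) = k ∧ ∀ i, (x : ZMod (b i)) ≠ 0 := by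
  obtain ⟨y, hy⟩ := exists_natCast_eq_of_pairwise_coprime hb hcop
    fun i => if (k : ZMod (b i)) = 0 then 1 else 0
  refine ⟨k + n * y, by simp, fun i => ?_⟩
  by_cases hk : (k : ZMod (b i)) = 0
  · simpa [hy, hk, ZMod.natCast_eq_zero_iff] using hn i
  · simp [hy, hk]

end

theorem injOn_range_of_natCast_eq {n : ℕ} {x : ℕ → ℕ} (hx : ∀ k, (x k : ZMod n) = k) :
    Set.InjOn x (range n) := by
  intro k hk l hl hkl
  have hkl' : (k : ZMod n) = l := by rw [← hx k, ← hx l, hkl]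
  rwa [ZMod.natCast_eq_natCast_iff', Nat.mod_eq_of_lt (mem_range.mp hk),
    Nat.mod_eq_of_lt (mem_range.mp hl)] at hkl'

theorem stmt1 (m : ℕ) (b : Fin m → ℕ) (hb : ∀ j, 2 ≤ b j)
    (hcop : ∀ i j, i ≠ j → Nat.Coprime (b i) (b j))
    (b' : ℕ) (hb'pos : 1 ≤ b') (hb' : ∀ j, ¬ b j ∣ b') :
    ∃ A : Finset ℕ, A.card = b' ∧
      (∀ j, ∃ z : ZMod (b j), ∀ a ∈ A, (a : ZMod (b j)) ≠ z) ∧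
      (∀ z : ZMod b', ∃ a ∈ A, (a : ZMod b') = z) := by
  have : NeZero b' := ⟨by omega⟩
  have hb0 : ∀ j, b j ≠ 0 := fun j => by linarith [hb j]
  choose x hx_mod hx_ne using exists_natCast_eq_and_natCast_ne_zero hb0 hcop hb'
  refine ⟨(range b').image x, ?_, fun j => ⟨0, ?_⟩, fun z => ⟨x z.val, ?_, ?_⟩⟩
  · rw [card_image_of_injOn (injOn_range_of_natCast_eq hx_mod), card_range]
  · simpa using fun k _ => hx_ne k j
  · exact mem_image_of_mem x (mem_range.mpr (ZMod.val_lt z))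
  · rw [hx_mod, ZMod.natCast_zmod_val]
end

section
/- Let 𝔅 = {b_k : k ≥ 1} and 𝔅' = {b'_k : k ≥ 1} each be sets of pairwise coprime integers ≥ 2 with ∑ 1/b_k < ∞ and ∑ 1/b'_k < ∞. If every finite 𝔅-admissible subset of ℤ is also 𝔅'-admissible, then for every b' ∈ 𝔅' there exists b ∈ 𝔅 such that b divides b'. -/
/-- A finite set `A ⊆ ℤ` is `𝔅`-admissible (for `𝔅 = {B k : k ∈ ℕ}`) if for every `k`
its reduction modulo `B k` omits at least one residue class. -/
def BAdmissible (B : ℕ → ℕ) (A : Finset ℤ) : Prop :=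
  ∀ k, ∃ z : ZMod (B k), ∀ a ∈ A, (a : ZMod (B k)) ≠ z

/-!
Suppose no `B k` divides `n ≠ 0`. For each residue `r < n` we pick a lift `r + n t_r`
that avoids the class `-1` modulo every `B k ≤ n`: since `B k ∤ n`, one of `r` and `r + n`
avoids it, and the Chinese remainder theorem makes the choices compatible. These `n` lifts
form a `𝔅`-admissible set (moduli `B k > n` are missed by pigeonhole) which meets every
residue class modulo `n`, so it cannot be admissible for any `𝔅'` containing `n`.
-/

open Finset Function

lemma Function.Injective.of_pairwise_coprime {B : ℕ → ℕ} (hB : ∀ k, B k ≠ 1)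
    (hcop : Pairwise (Nat.Coprime on B)) : Injective B := by
  intro i j hij
  by_contra hne
  have := hcop hne
  rw [Function.onFun, hij, Nat.coprime_self] at this
  exact hB j this

lemma ZMod.exists_forall_intCast_ne_of_card_lt {m : ℕ} (A : Finset ℤ) (hA : #A < m) :
    ∃ z : ZMod m, ∀ a ∈ A, (a : ZMod m) ≠ z := by
  have : NeZero m := ⟨by omega⟩
  have hcard : #(A.image ((↑) : ℤ → ZMod m)) < #(univ : Finset (ZMod m)) := by
    rw [card_univ, ZMod.card]
    exact card_image_le.trans_lt hA
  obtain ⟨z, -, hz⟩ := exists_mem_notMem_of_card_lt_card hcard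
  exact ⟨z, fun a ha haz => hz (mem_image.mpr ⟨a, ha, haz⟩)⟩

lemma exists_forall_add_mul_ne_neg_one {ι : Type*} (S : Finset ι) {m : ι → ℕ}
    (hm : ∀ i ∈ S, m i ≠ 0) (hcop : (S : Set ι).Pairwise (Nat.Coprime on m))
    {n : ℤ} (hn : ∀ i ∈ S, ¬ (m i : ℤ) ∣ n) (r : ℤ) :
    ∃ t : ℕ, ∀ i ∈ S, ((r + n * t : ℤ) : ZMod (m i)) ≠ -1 := by
  have hlocal : ∀ i ∈ S, ∃ c : ℕ, ((r + n * c : ℤ) : ZMod (m i)) ≠ -1 := by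
    intro i hi
    by_cases hr : (r : ZMod (m i)) = -1
    · refine ⟨1, ?_⟩
      have hn0 : (n : ZMod (m i)) ≠ 0 := by
        rw [Ne, ZMod.intCast_zmod_eq_zero_iff_dvd]
        exact hn i hi
      push_cast
      rwa [hr, mul_one, Ne, neg_add_eq_iff_eq_add, add_neg_cancel]
    · exact ⟨0, by simpa using hr⟩
  choose! c hc using hlocal
  obtain ⟨t, ht⟩ := Nat.chineseRemainderOfFinset c m S hm hcop
  refine ⟨t, fun i hi => ?_⟩
  have htc : (t : ZMod (m i)) = c i := (ZMod.natCast_eq_natCast_iff _ _ _).mpr (ht i hi)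
  have := hc i hi
  push_cast at this ⊢
  rwa [htc]

lemma exists_bAdmissible_of_forall_not_dvd {B : ℕ → ℕ} (hB : ∀ k, 2 ≤ B k)
    (hcop : Pairwise (Nat.Coprime on B)) {n : ℕ} (hn : n ≠ 0) (hdvd : ∀ k, ¬ B k ∣ n) :
    ∃ A : Finset ℤ, BAdmissible B A ∧ ∀ z : ZMod n, ∃ a ∈ A, (a : ZMod n) = z := by
  have hinj := Function.Injective.of_pairwise_coprime (fun k => by have := hB k; omega) hcop
  set S := ((Set.finite_Iic n).preimage hinj.injOn).toFinset
  have hS : ∀ k, k ∈ S ↔ B k ≤ n := fun k => by simp [S]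
  choose t ht using exists_forall_add_mul_ne_neg_one S (m := B)
    (fun k _ => by have := hB k; omega) (fun i _ j _ hij => hcop hij)
    (n := n) (fun k _ => by exact_mod_cast hdvd k)
  set A := (range n).image fun r : ℕ => (r + n * t r : ℤ)
  refine ⟨A, fun k => ?_, fun z => ?_⟩
  · by_cases hk : B k ≤ n
    · refine ⟨-1, fun a ha => ?_⟩
      obtain ⟨r, -, rfl⟩ := mem_image.mp ha
      exact ht r k ((hS k).mpr hk)
    · exact ZMod.exists_forall_intCast_ne_of_card_lt A
        (card_image_le.trans_lt (by rw [card_range]; omega))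
  · have : NeZero n := ⟨hn⟩
    refine ⟨_, mem_image_of_mem _ (mem_range.mpr (ZMod.val_lt z)), ?_⟩
    push_cast
    simp

theorem exists_dvd_of_forall_bAdmissible {B : ℕ → ℕ} (hB : ∀ k, 2 ≤ B k)
    (hcop : Pairwise (Nat.Coprime on B)) {n : ℕ}
    (h : ∀ A : Finset ℤ, BAdmissible B A → ∃ z : ZMod n, ∀ a ∈ A, (a : ZMod n) ≠ z) :
    ∃ k, B k ∣ n := by
  by_contra! hdvd
  have hn : n ≠ 0 := fun hn => hdvd 0 (by simp [hn])
  obtain ⟨A, hA, hsurj⟩ := exists_bAdmissible_of_forall_not_dvd hB hcop hn hdvd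
  obtain ⟨z, hz⟩ := h A hA
  obtain ⟨a, ha, rfl⟩ := hsurj z
  exact hz a ha rfl

theorem stmt2_general (B B' : ℕ → ℕ)
    (hB : ∀ k, 2 ≤ B k)
    (hcop : ∀ i j, i ≠ j → Nat.Coprime (B i) (B j))
    (h : ∀ A : Finset ℤ, BAdmissible B A → BAdmissible B' A) :
    ∀ k', ∃ k, B k ∣ B' k' :=
  fun k' => exists_dvd_of_forall_bAdmissible hB (fun i j hij => hcop i j hij)
    fun A hA => h A hA k'

theorem stmt2 (B B' : ℕ → ℕ)
    (hB : ∀ k, 2 ≤ B k) (hB' : ∀ k, 2 ≤ B' k)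
    (hcop : ∀ i j, i ≠ j → Nat.Coprime (B i) (B j))
    (hcop' : ∀ i j, i ≠ j → Nat.Coprime (B' i) (B' j))
    (hsum : Summable fun k => (1 : ℝ) / B k)
    (hsum' : Summable fun k => (1 : ℝ) / B' k)
    (h : ∀ A : Finset ℤ, BAdmissible B A → BAdmissible B' A) :
    ∀ k', ∃ k, B k ∣ B' k' :=
  stmt2_general B B' hB hcop h
end

section
/- Let 𝔅 = {b_k : k ≥ 1} and 𝔅' = {b'_k : k ≥ 1} each be sets of pairwise coprime integers ≥ 2 with ∑ 1/b_k < ∞ and ∑ 1/b'_k < ∞. If a finite set A ⊂ ℤ is 𝔅-admissible if and only if it is 𝔅'-admissible (for all finite A), then 𝔅 = 𝔅'. -/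
def OmitsResidue (n : ℕ) (A : Finset ℤ) : Prop :=
  ∃ z : ZMod n, ∀ a ∈ A, (a : ZMod n) ≠ z

theorem omitsResidue_of_card_lt {n : ℕ} {A : Finset ℤ} (hA : A.card < n) :
    OmitsResidue n A := by
  have : NeZero n := ⟨by omega⟩
  have hcard : (A.image fun a : ℤ => (a : ZMod n)).card < (Finset.univ : Finset (ZMod n)).card := by
    rw [Finset.card_univ, ZMod.card]
    exact Finset.card_image_le.trans_lt hA
  obtain ⟨z, -, hz⟩ := Finset.exists_mem_notMem_of_card_lt_card hcard
  exact ⟨z, fun a ha haz => hz (haz ▸ Finset.mem_image_of_mem _ ha)⟩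

theorem omitsResidue_of_forall_lt {m g : ℕ} {A : Finset ℤ} (hgm : g < m)
    (hA : ∀ a ∈ A, ∃ r < g, (a : ZMod m) = r) : OmitsResidue m A := by
  refine ⟨g, fun a ha hag => ?_⟩
  obtain ⟨r, hrg, har⟩ := hA a ha
  have hrg' := (ZMod.natCast_eq_natCast_iff' r g m).mp (har ▸ hag)
  rw [Nat.mod_eq_of_lt (hrg.trans hgm), Nat.mod_eq_of_lt hgm] at hrg'
  omega

theorem Nat.exists_modEq_of_pairwise_coprime (n : ℕ) (S : Finset ℕ)
    (hS : (S : Set ℕ).Pairwise Nat.Coprime) (a : ℕ) (c : ℕ → ℕ)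
    (hc : ∀ m ∈ S, c m ≡ a [MOD Nat.gcd m n]) :
    ∃ x, x ≡ a [MOD n] ∧ ∀ m ∈ S, x ≡ c m [MOD m] := by
  classical
  induction S using Finset.induction_on with
  | empty => exact ⟨a, rfl, by simp⟩
  | insert m₀ S hm₀ ih =>
    rw [Finset.coe_insert, Set.pairwise_insert] at hS
    obtain ⟨x, hxn, hxS⟩ := ih hS.1 fun m hm => hc m (Finset.mem_insert_of_mem hm)
    have hcop : Nat.Coprime (∏ m ∈ S, m) m₀ := Nat.Coprime.prod_left fun m hm =>
      (hS.2 m hm fun h => hm₀ (h ▸ hm)).2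
    have hcompat : x ≡ c m₀ [MOD Nat.gcd (n * ∏ m ∈ S, m) m₀] := by
      rw [Nat.Coprime.gcd_mul_right_cancel n hcop, Nat.gcd_comm]
      exact (hxn.of_dvd (Nat.gcd_dvd_right m₀ n)).trans (hc m₀ (Finset.mem_insert_self _ _)).symm
    obtain ⟨y, hyP, hym₀⟩ := Nat.chineseRemainder' hcompat
    refine ⟨y, (hyP.of_dvd (dvd_mul_right n _)).trans hxn, fun m hm => ?_⟩
    rcases Finset.mem_insert.mp hm with rfl | hm
    · exact hym₀
    · exact (hyP.of_dvd (dvd_mul_of_dvd_right (Finset.dvd_prod_of_mem _ hm) n)).trans (hxS m hm)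

theorem exists_dvd_of_forall_omitsResidue_imp {𝔅 : Set ℕ} (h𝔅 : 𝔅.Pairwise Nat.Coprime)
    (h𝔅₀ : 0 ∉ 𝔅) {b : ℕ} (hb : 0 < b)
    (h : ∀ A : Finset ℤ, (∀ m ∈ 𝔅, OmitsResidue m A) → OmitsResidue b A) :
    ∃ m ∈ 𝔅, m ∣ b := by
  classical
  by_contra! hnd
  set S := (Finset.range (b + 1)).filter (· ∈ 𝔅)
  have hS : (S : Set ℕ).Pairwise Nat.Coprime :=
    h𝔅.mono fun m hm => (Finset.mem_filter.mp hm).2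
  choose x hxb hxS using fun i =>
    Nat.exists_modEq_of_pairwise_coprime b S hS i (fun m => i % Nat.gcd m b)
      fun m _ => Nat.mod_modEq i _
  set A := (Finset.range b).image fun i => (x i : ℤ)
  have hA : ∀ m ∈ 𝔅, OmitsResidue m A := by
    intro m hm
    by_cases hmb : m ≤ b
    · have hmS : m ∈ S := Finset.mem_filter.mpr ⟨Finset.mem_range.mpr (by omega), hm⟩
      have hgm : Nat.gcd m b < m := by
        refine lt_of_le_of_ne (Nat.gcd_le_left b (Nat.pos_of_ne_zero fun h => h𝔅₀ (h ▸ hm))) ?_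
        exact fun h => hnd m hm (h ▸ Nat.gcd_dvd_right m b)
      refine omitsResidue_of_forall_lt hgm fun a ha => ?_
      obtain ⟨i, -, rfl⟩ := Finset.mem_image.mp ha
      refine ⟨i % Nat.gcd m b, Nat.mod_lt _ (Nat.gcd_pos_of_pos_right m hb), ?_⟩
      rw [Int.cast_natCast, ZMod.natCast_eq_natCast_iff]
      exact hxS i m hmS
    · exact omitsResidue_of_card_lt (Finset.card_image_le.trans_lt (by simpa using hmb))
  have : NeZero b := ⟨hb.ne'⟩
  obtain ⟨z, hz⟩ := h A hA
  refine hz (x z.val) (Finset.mem_image_of_mem _ (Finset.mem_range.mpr z.val_lt)) ?_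
  rw [Int.cast_natCast, (ZMod.natCast_eq_natCast_iff _ _ b).mpr (hxb z.val), ZMod.natCast_zmod_val]

theorem subset_of_forall_exists_dvd {𝔅 𝔅' : Set ℕ} (h𝔅 : 𝔅.Pairwise Nat.Coprime)
    (h𝔅₁ : 1 ∉ 𝔅) (h : ∀ n ∈ 𝔅, ∃ m ∈ 𝔅', m ∣ n) (h' : ∀ m ∈ 𝔅', ∃ n ∈ 𝔅, n ∣ m) :
    𝔅 ⊆ 𝔅' := by
  intro n hn
  obtain ⟨m, hm, hmn⟩ := h n hn
  obtain ⟨n', hn', hn'm⟩ := h' m hm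
  have hn'n : n' = n := by
    by_contra hne
    exact h𝔅₁ ((h𝔅 hn' hn hne).eq_one_of_dvd (hn'm.trans hmn) ▸ hn')
  exact Nat.dvd_antisymm hmn (hn'n ▸ hn'm) ▸ hm

theorem pairwise_coprime_range {B : ℕ → ℕ} (hcop : ∀ i j, i ≠ j → Nat.Coprime (B i) (B j)) :
    (Set.range B).Pairwise Nat.Coprime := by
  rintro _ ⟨i, rfl⟩ _ ⟨j, rfl⟩ hne
  exact hcop i j fun hij => hne (hij ▸ rfl)

theorem forall_exists_dvd_of_bAdmissible_imp {B B' : ℕ → ℕ} (hB : ∀ k, 2 ≤ B k)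
    (hB' : ∀ k, 2 ≤ B' k) (hcop' : ∀ i j, i ≠ j → Nat.Coprime (B' i) (B' j))
    (h : ∀ A : Finset ℤ, BAdmissible B' A → BAdmissible B A) :
    ∀ n ∈ Set.range B, ∃ m ∈ Set.range B', m ∣ n := by
  rintro _ ⟨k, rfl⟩
  refine exists_dvd_of_forall_omitsResidue_imp (pairwise_coprime_range hcop')
    (fun ⟨j, hj⟩ => by have := hB' j; omega) (by have := hB k; omega) fun A hA => ?_
  exact h A (fun j => hA _ ⟨j, rfl⟩) k

theorem stmt3_general (B B' : ℕ → ℕ)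
    (hB : ∀ k, 2 ≤ B k) (hB' : ∀ k, 2 ≤ B' k)
    (hcop : ∀ i j, i ≠ j → Nat.Coprime (B i) (B j))
    (hcop' : ∀ i j, i ≠ j → Nat.Coprime (B' i) (B' j))
    (h : ∀ A : Finset ℤ, BAdmissible B A ↔ BAdmissible B' A) :
    Set.range B = Set.range B' := by
  have hdvd := forall_exists_dvd_of_bAdmissible_imp hB hB' hcop' fun A => (h A).mpr
  have hdvd' := forall_exists_dvd_of_bAdmissible_imp hB' hB hcop fun A => (h A).mp
  have hone : ∀ {C : ℕ → ℕ}, (∀ k, 2 ≤ C k) → 1 ∉ Set.range C :=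
    fun hC ⟨k, hk⟩ => by have := hC k; omega
  exact (subset_of_forall_exists_dvd (pairwise_coprime_range hcop) (hone hB) hdvd hdvd').antisymm
    (subset_of_forall_exists_dvd (pairwise_coprime_range hcop') (hone hB') hdvd' hdvd)

theorem stmt3 (B B' : ℕ → ℕ)
    (hB : ∀ k, 2 ≤ B k) (hB' : ∀ k, 2 ≤ B' k)
    (hcop : ∀ i j, i ≠ j → Nat.Coprime (B i) (B j))
    (hcop' : ∀ i j, i ≠ j → Nat.Coprime (B' i) (B' j))
    (hsum : Summable fun k => (1 : ℝ) / B k)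
    (hsum' : Summable fun k => (1 : ℝ) / B' k)
    (h : ∀ A : Finset ℤ, BAdmissible B A ↔ BAdmissible B' A) :
    Set.range B = Set.range B' :=
  stmt3_general B B' hB hB' hcop hcop' h
end

section
/- Let b_1, …, b_K be pairwise coprime integers ≥ 2, let s_k be integers with 1 ≤ s_k ≤ b_k − 1, and let x ∈ {0,1}^ℤ be such that for every k the set supp(x) mod b_k has cardinality at most b_k − s_k. Then for every n ∈ ℤ, the number of elements of supp(x) in the interval {n, n+1, …, n + b_1⋯b_K − 1} is at most ∏_{k=1}^K (b_k − s_k). Consequently the density of supp(x) in any such interval is at most ∏_{k=1}^K (1 − s_k/b_k). -/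
open Finset Function

/-! By the Chinese remainder theorem, `m ↦ (m mod b_k)_k` is injective on every interval of length
`∏ k, b k`, and it maps the support of `x` in such an interval into `∏ k, (supp x mod b_k)`, a set
of size at most `∏ k, (b k - s k)`. -/

theorem ZMod.intCast_injOn_Ico (N : ℕ) (n : ℤ) :
    Set.InjOn (fun m : ℤ ↦ (m : ZMod N)) (Set.Ico n (n + N)) := by
  intro a ha c hc hac
  have hdvd : (N : ℤ) ∣ a - c := (ZMod.intCast_eq_intCast_iff_dvd_sub c a N).1 hac.symm
  have hlt : |a - c| < N := by
    rw [abs_sub_lt_iff]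
    constructor <;> linarith [ha.1, ha.2, hc.1, hc.2]
  exact sub_eq_zero.1 (Int.eq_zero_of_abs_lt_dvd hdvd hlt)

section

variable {ι : Type*} [Fintype ι] (b : ι → ℕ) (hcop : Pairwise (Nat.Coprime on b))
include hcop

theorem ZMod.intCast_pi_injOn_Ico (n : ℤ) :
    Set.InjOn (fun (m : ℤ) (k : ι) ↦ (m : ZMod (b k))) (Set.Ico n (n + (∏ k, b k : ℕ))) := by
  intro a ha c hc hac
  refine ZMod.intCast_injOn_Ico _ n ha hc <|
    (ZMod.prodEquivPi b hcop).injective <| funext fun k ↦ ?_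
  simpa only [ZMod.prodEquivPi_apply, map_intCast] using congrFun hac k

theorem card_filter_Ico_le_prod_ncard [∀ k, NeZero (b k)] (p : ℤ → Prop) [DecidablePred p]
    (n : ℤ) :
    #{m ∈ Ico n (n + (∏ k, b k : ℕ)) | p m}
      ≤ ∏ k, {z : ZMod (b k) | ∃ m : ℤ, p m ∧ (m : ZMod (b k)) = z}.ncard := by
  classical
  set F : Finset ℤ := {m ∈ Ico n (n + (∏ k, b k : ℕ)) | p m}
  let T k := (Set.toFinite {z : ZMod (b k) | ∃ m : ℤ, p m ∧ (m : ZMod (b k)) = z}).toFinset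
  have hmaps : ∀ m ∈ F, (fun k ↦ (m : ZMod (b k))) ∈ Fintype.piFinset T := fun m hm ↦
    Fintype.mem_piFinset.2 fun k ↦ (Set.Finite.mem_toFinset _).2 ⟨m, (mem_filter.1 hm).2, rfl⟩
  have hinj : Set.InjOn (fun (m : ℤ) (k : ι) ↦ (m : ZMod (b k))) F :=
    (ZMod.intCast_pi_injOn_Ico b hcop n).mono fun m hm ↦ mem_Ico.1 (mem_filter.1 hm).1
  calc #F ≤ #(Fintype.piFinset T) := card_le_card_of_injOn _ hmaps hinj
    _ = ∏ k, #(T k) := Fintype.card_piFinset T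
    _ = _ := prod_congr rfl fun k _ ↦ (Set.ncard_eq_toFinset_card _ _).symm

end

theorem prod_one_sub_div_eq {ι 𝕜 : Type*} [Fintype ι] [Field 𝕜] [CharZero 𝕜] (b s : ι → ℕ)
    (hb : ∀ k, b k ≠ 0) (hsb : ∀ k, s k ≤ b k) :
    ∏ k, (1 - (s k : 𝕜) / b k) = ((∏ k, (b k - s k) : ℕ) : 𝕜) / ((∏ k, b k : ℕ) : 𝕜) := by
  rw [Nat.cast_prod, Nat.cast_prod, ← prod_div_distrib]
  refine prod_congr rfl fun k _ ↦ ?_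
  have hbk : (b k : 𝕜) ≠ 0 := Nat.cast_ne_zero.2 (hb k)
  rw [Nat.cast_sub (hsb k)]
  field_simp

theorem stmt5 (K : ℕ) (b s : Fin K → ℕ)
    (hb : ∀ k, 2 ≤ b k) (hcop : ∀ i j, i ≠ j → Nat.Coprime (b i) (b j))
    (hs : ∀ k, 1 ≤ s k ∧ s k ≤ b k - 1)
    (x : ℤ → Bool)
    (hsupp : ∀ k,
      ({z : ZMod (b k) | ∃ m : ℤ, x m = true ∧ (m : ZMod (b k)) = z}).ncard ≤ b k - s k) :
    ∀ n : ℤ,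
      (((Finset.Ico n (n + ((∏ k, b k : ℕ) : ℤ))).filter (fun m => x m = true)).card
          ≤ ∏ k, (b k - s k)) ∧
      ((((Finset.Ico n (n + ((∏ k, b k : ℕ) : ℤ))).filter (fun m => x m = true)).card : ℝ)
          / ((∏ k, b k : ℕ) : ℝ) ≤ ∏ k, (1 - (s k : ℝ) / (b k : ℝ))) := by
  intro n
  have hb0 : ∀ k, b k ≠ 0 := fun k ↦ by have := hb k; omega
  have : ∀ k, NeZero (b k) := fun k ↦ ⟨hb0 k⟩
  have hcard := (card_filter_Ico_le_prod_ncard b hcop (fun m ↦ x m = true) n).trans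
    (prod_le_prod' fun k _ ↦ hsupp k)
  refine ⟨hcard, ?_⟩
  rw [prod_one_sub_div_eq b s hb0 fun k ↦ (hs k).2.trans (Nat.sub_le _ _)]
  gcongr
end

section
/- Let C ∈ {0,1}^n be a finite word with smallest period n, let x_C ∈ {0,1}^ℤ be the bi-infinite periodic concatenation of C, let X_C be its (finite) orbit under the shift, and let X̃_C be the smallest hereditary subshift containing X_C. Then h_top(S, X̃_C) = d·log 2, where d = |supp C|/|C| is the fraction of 1's in C. -/
open Filter

/-- The set of words of length `n` occurring in points of `X`. -/
def wordsOf (X : Set (ℤ → Bool)) (n : ℕ) : Set (Fin n → Bool) :=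
  {w | ∃ x ∈ X, ∃ i : ℤ, ∀ j : Fin n, x (i + (j : ℤ)) = w j}

/-- The smallest hereditary subshift containing `X`. -/
def hereditaryClosure (X : Set (ℤ → Bool)) : Set (ℤ → Bool) :=
  {y | ∃ x ∈ X, ∀ n, y n ≤ x n}


/-!
A word of length `m` occurs in the hereditary closure of the orbit of `x` iff it is dominated
by a window `x[i, i + m)`, and a window with `k` ones dominates exactly `2 ^ k` words.
By `n`-periodicity there are at most `n` distinct windows, and each contains between
`⌊m / n⌋ d` and `(⌊m / n⌋ + 1) d` ones, where `d` is the number of ones in one period.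
Hence `2 ^ (⌊m / n⌋ d) ≤ #words ≤ n 2 ^ ((⌊m / n⌋ + 1) d)`, and both bounds grow like
`2 ^ (m d / n)`.
-/

open Topology

theorem Pi.ncard_Iic_bool {ι : Type*} [Fintype ι] (v : ι → Bool) :
    (Set.Iic v).ncard = 2 ^ ∑ i, (v i).toNat := by
  rw [← Set.pi_univ_Iic, ← Nat.card_coe_set_eq, Nat.card_congr (Equiv.Set.univPi _),
    Nat.card_pi, ← Finset.prod_pow_eq_pow_sum]
  refine Finset.prod_congr rfl fun i _ => ?_
  rw [Nat.card_eq_fintype_card]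
  cases v i <;> rfl

theorem wordsOf_hereditaryClosure (X : Set (ℤ → Bool)) (m : ℕ) :
    wordsOf (hereditaryClosure X) m = ⋃ v ∈ wordsOf X m, Set.Iic v := by
  ext w
  simp only [Set.mem_iUnion, Set.mem_Iic]
  constructor
  · rintro ⟨y, ⟨z, hz, hyz⟩, i, hw⟩
    exact ⟨fun j => z (i + j), ⟨z, hz, i, fun _ => rfl⟩, fun j => hw j ▸ hyz _⟩
  · rintro ⟨v, ⟨z, hz, i, hv⟩, hwv⟩
    have hinj : Function.Injective fun j : Fin m => i + (j : ℤ) :=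
      (add_right_injective i).comp (Nat.cast_injective.comp Fin.val_injective)
    refine ⟨Function.extend (fun j : Fin m => i + (j : ℤ)) w ⊥, ⟨z, hz, fun t => ?_⟩, i,
      fun j => hinj.extend_apply _ _ j⟩
    by_cases ht : ∃ j : Fin m, i + (j : ℤ) = t
    · obtain ⟨j, rfl⟩ := ht
      rw [hinj.extend_apply, hv]
      exact hwv j
    · rw [Function.extend_apply' _ _ _ ht]
      exact bot_le

def window (x : ℤ → Bool) (i : ℤ) (m : ℕ) : Fin m → Bool := fun j => x (i + j)

def shiftOrbit (x : ℤ → Bool) : Set (ℤ → Bool) := {y | ∃ k : ℤ, ∀ i, y i = x (i + k)}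

theorem wordsOf_shiftOrbit (x : ℤ → Bool) (m : ℕ) :
    wordsOf (shiftOrbit x) m = Set.range (window x · m) := by
  ext w
  constructor
  · rintro ⟨y, ⟨k, hy⟩, i, hw⟩
    refine ⟨i + k, funext fun j => ?_⟩
    rw [← hw j, hy]
    exact congrArg x (add_right_comm i k j)
  · rintro ⟨i, rfl⟩
    exact ⟨x, ⟨0, fun i => by rw [add_zero]⟩, i, fun _ => rfl⟩

theorem wordsOf_hereditaryClosure_shiftOrbit (x : ℤ → Bool) (m : ℕ) :
    wordsOf (hereditaryClosure (shiftOrbit x)) m = ⋃ i, Set.Iic (window x i m) := by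
  rw [wordsOf_hereditaryClosure, wordsOf_shiftOrbit, Set.biUnion_range]

theorem window_emod {x : ℤ → Bool} {n : ℕ} (hper : Function.Periodic x n) (i : ℤ) (m : ℕ) :
    window x (i % n) m = window x i m := by
  funext j
  rw [window, window, ← hper.int_mul (i / n) (i % n + j)]
  congr 1
  linear_combination Int.emod_add_ediv_mul i n

def onesCount (x : ℤ → Bool) (i : ℤ) (m : ℕ) : ℕ := ∑ j ∈ Finset.range m, (x (i + j)).toNat

section onesCount

variable {x : ℤ → Bool}

theorem ncard_Iic_window (i : ℤ) (m : ℕ) :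
    (Set.Iic (window x i m)).ncard = 2 ^ onesCount x i m := by
  rw [Pi.ncard_Iic_bool]
  exact congrArg _ (Fin.sum_univ_eq_sum_range (fun j => (x (i + j)).toNat) m)

theorem onesCount_one (i : ℤ) : onesCount x i 1 = (x i).toNat := by
  simp [onesCount]

theorem onesCount_add (i : ℤ) (a b : ℕ) :
    onesCount x i (a + b) = onesCount x i a + onesCount x (i + a) b := by
  simp only [onesCount, Finset.sum_range_add, Nat.cast_add, add_assoc]

theorem onesCount_mono (i : ℤ) {a b : ℕ} (h : a ≤ b) : onesCount x i a ≤ onesCount x i b :=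
  Finset.sum_le_sum_of_subset (Finset.range_subset_range.2 h)

theorem onesCount_zero_eq_card_filter (n : ℕ) :
    onesCount x 0 n = ((Finset.Ico (0 : ℤ) n).filter fun i => x i = true).card := by
  have hIco : Finset.Ico (0 : ℤ) n = (Finset.range n).map Nat.castEmbedding := by
    ext i
    simp only [Finset.mem_Ico, Finset.mem_map, Finset.mem_range, Nat.castEmbedding_apply]
    constructor
    · intro h
      exact ⟨i.toNat, by omega, by omega⟩
    · rintro ⟨k, hk, rfl⟩
      omega
  rw [Finset.card_filter, hIco, Finset.sum_map]
  refine Finset.sum_congr rfl fun j _ => ?_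
  rw [zero_add, Nat.castEmbedding_apply]
  cases x j <;> rfl

variable {n : ℕ} (hper : Function.Periodic x n)
include hper

theorem onesCount_period_eq (i : ℤ) : onesCount x i n = onesCount x 0 n := by
  -- `x[i, i + n]` is `x i` followed by the window at `i + 1`, and also the window at `i`
  -- followed by `x (i + n) = x i`
  have step (i : ℤ) : onesCount x (i + 1) n = onesCount x i n := by
    have h := onesCount_add (x := x) i 1 n
    rw [add_comm 1 n, onesCount_add, onesCount_one, onesCount_one, hper, Nat.cast_one] at h
    omega
  induction i using Int.induction_on with
  | zero => rfl
  | succ k ih => rw [step, ih]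
  | pred k ih => rw [← step, sub_add_cancel, ih]

theorem onesCount_mul_period (i : ℤ) (q : ℕ) : onesCount x i (q * n) = q * onesCount x 0 n := by
  induction q with
  | zero => simp [onesCount]
  | succ q ih =>
    rw [add_mul, one_mul, onesCount_add, ih, onesCount_period_eq hper (i + _), add_mul, one_mul]

theorem div_mul_onesCount_le (i : ℤ) (m : ℕ) : m / n * onesCount x 0 n ≤ onesCount x i m := by
  rw [← onesCount_mul_period hper i]
  exact onesCount_mono i (Nat.div_mul_le_self m n)

theorem onesCount_le_succ_div_mul (hn : 0 < n) (i : ℤ) (m : ℕ) :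
    onesCount x i m ≤ (m / n + 1) * onesCount x 0 n := by
  rw [← onesCount_mul_period hper i]
  exact onesCount_mono i (by rw [add_mul, one_mul]; exact (Nat.lt_div_mul_add hn).le)

end onesCount

section wordCount

variable {x : ℤ → Bool} {n : ℕ} (hper : Function.Periodic x n)
include hper

theorem two_pow_le_ncard_wordsOf (m : ℕ) :
    2 ^ (m / n * onesCount x 0 n) ≤ (wordsOf (hereditaryClosure (shiftOrbit x)) m).ncard := by
  rw [wordsOf_hereditaryClosure_shiftOrbit]
  calc 2 ^ (m / n * onesCount x 0 n) ≤ 2 ^ onesCount x 0 m :=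
        Nat.pow_le_pow_right two_pos (div_mul_onesCount_le hper 0 m)
    _ = (Set.Iic (window x 0 m)).ncard := (ncard_Iic_window 0 m).symm
    _ ≤ _ := Set.ncard_le_ncard (Set.subset_iUnion (fun i => Set.Iic (window x i m)) 0)
        (Set.toFinite _)

theorem ncard_wordsOf_le (hn : 0 < n) (m : ℕ) :
    (wordsOf (hereditaryClosure (shiftOrbit x)) m).ncard
      ≤ n * 2 ^ ((m / n + 1) * onesCount x 0 n) := by
  have hcover : ⋃ i : ℤ, Set.Iic (window x i m)
      = ⋃ k ∈ Finset.range n, Set.Iic (window x k m) := by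
    refine subset_antisymm (Set.iUnion_subset fun i => ?_)
      (Set.iUnion₂_subset fun k _ => Set.subset_iUnion (fun i : ℤ => Set.Iic (window x i m)) k)
    have h0 : 0 ≤ i % n := Int.emod_nonneg i (by omega)
    have hlt : i % n < n := Int.emod_lt_of_pos i (by omega)
    rw [← window_emod hper, ← Int.toNat_of_nonneg h0]
    exact Set.subset_biUnion_of_mem (u := fun k : ℕ => Set.Iic (window x k m))
      (Finset.mem_coe.2 (Finset.mem_range.2 (by omega)))
  rw [wordsOf_hereditaryClosure_shiftOrbit, hcover]
  calc _ ≤ ∑ k ∈ Finset.range n, (Set.Iic (window x k m)).ncard :=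
        Finset.set_ncard_biUnion_le _ _
    _ ≤ (Finset.range n).card • 2 ^ ((m / n + 1) * onesCount x 0 n) :=
        Finset.sum_le_card_nsmul _ _ _ fun k _ => by
          rw [ncard_Iic_window]
          exact Nat.pow_le_pow_right two_pos (onesCount_le_succ_div_mul hper hn _ m)
    _ = _ := by rw [Finset.card_range, smul_eq_mul]

end wordCount

theorem tendsto_natDiv_div_atTop {n : ℕ} (hn : 0 < n) :
    Tendsto (fun m : ℕ => ((m / n : ℕ) : ℝ) / m) atTop (𝓝 (1 / n)) := by
  have hfloor := (tendsto_nat_floor_div_atTop (R := ℝ)).comp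
    (tendsto_natCast_atTop_atTop.atTop_div_const (by positivity : (0 : ℝ) < n))
  have := hfloor.mul_const (1 / (n : ℝ))
  rw [one_mul] at this
  refine this.congr' ?_
  filter_upwards [eventually_ne_atTop 0] with m hm
  simp only [Function.comp_apply, Nat.floor_div_eq_div]
  field_simp

theorem tendsto_div_of_natDiv_mul_bounds {a : ℕ → ℝ} {n : ℕ} (hn : 0 < n) {c C : ℝ}
    (hlow : ∀ m, (m / n : ℕ) * c ≤ a m) (hup : ∀ m, a m ≤ C + (m / n : ℕ) * c) :
    Tendsto (fun m => a m / m) atTop (𝓝 (c / n)) := by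
  have hq := (tendsto_natDiv_div_atTop hn).mul_const c
  have hlim : 1 / (n : ℝ) * c = c / n := by ring
  rw [hlim] at hq
  have hq' := (tendsto_one_div_atTop_nhds_zero_nat.const_mul C).add hq
  rw [mul_zero, zero_add] at hq'
  refine tendsto_of_tendsto_of_tendsto_of_le_of_le hq hq' (fun m => ?_) (fun m => ?_)
  · rw [div_mul_eq_mul_div]
    exact div_le_div_of_nonneg_right (hlow m) (Nat.cast_nonneg m)
  · calc a m / m ≤ (C + (m / n : ℕ) * c) / m :=
          div_le_div_of_nonneg_right (hup m) (Nat.cast_nonneg m)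
      _ = C * (1 / m) + (m / n : ℕ) / m * c := by ring

open scoped Classical in
theorem stmt10_general (n : ℕ) (hn : 0 < n) (x : ℤ → Bool)
    (hper : ∀ i : ℤ, x (i + (n : ℤ)) = x i) :
    Tendsto
      (fun m : ℕ =>
        Real.log ((wordsOf
          (hereditaryClosure {y : ℤ → Bool | ∃ k : ℤ, ∀ i, y i = x (i + k)}) m).ncard) / m)
      atTop
      (nhds ((((Finset.Ico (0 : ℤ) (n : ℤ)).filter (fun i => x i = true)).card : ℝ) / (n : ℝ)
        * Real.log 2)) := by
  rw [← onesCount_zero_eq_card_filter, div_mul_eq_mul_div]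
  set d := onesCount x 0 n
  refine tendsto_div_of_natDiv_mul_bounds hn (C := Real.log n + d * Real.log 2)
    (fun m => ?_) (fun m => ?_)
  · calc ((m / n : ℕ) : ℝ) * (d * Real.log 2) = Real.log (2 ^ (m / n * d)) := by
          rw [Real.log_pow]; push_cast; ring
      _ ≤ _ := Real.log_le_log (by positivity) (by exact_mod_cast two_pow_le_ncard_wordsOf hper m)
  · have hpos : (0 : ℝ) < (wordsOf (hereditaryClosure (shiftOrbit x)) m).ncard := by
      exact_mod_cast Nat.one_le_two_pow.trans (two_pow_le_ncard_wordsOf hper m)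
    calc _ ≤ Real.log (n * 2 ^ ((m / n + 1) * d)) :=
          Real.log_le_log hpos (by exact_mod_cast ncard_wordsOf_le hper hn m)
      _ = _ := by
          rw [Real.log_mul (by positivity) (by positivity), Real.log_pow]
          push_cast
          ring

open scoped Classical in
theorem stmt10 (n : ℕ) (hn : 0 < n) (x : ℤ → Bool)
    (hper : ∀ i : ℤ, x (i + (n : ℤ)) = x i)
    (hmin : ∀ p : ℤ, 0 < p → (∀ i, x (i + p) = x i) → (n : ℤ) ∣ p) :
    Tendsto
      (fun m : ℕ =>
        Real.log ((wordsOf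
          (hereditaryClosure {y : ℤ → Bool | ∃ k : ℤ, ∀ i, y i = x (i + k)}) m).ncard) / m)
      atTop
      (nhds ((((Finset.Ico (0 : ℤ) (n : ℤ)).filter (fun i => x i = true)).card : ℝ) / (n : ℝ)
        * Real.log 2)) :=
  stmt10_general n hn x hper
end

section
/- With 𝔅, Ω, φ as above, define θ on Y = {x ∈ X_η : ∀k, |supp(x) mod b_k| = b_k − 1} by θ(y) = ω where −ω(k) is the unique residue mod b_k missed by supp(y). Then θ is equivariant: θ(Sy) = Tθ(y), where S is the shift and Tω = ω + (1,1,1,…). Moreover y ≤ φ(θ(y)) coordinatewise for every y ∈ Y. -/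
def MissesResidue (y : ℤ → Bool) (n : ℕ) (z : ZMod n) : Prop :=
  ∀ m : ℤ, y m = true → (m : ZMod n) ≠ z

section

variable {y : ℤ → Bool} {n : ℕ} {z : ZMod n}

theorem missesResidue_shift_iff :
    MissesResidue (fun m => y (m + 1)) n z ↔ MissesResidue y n (z + 1) := by
  constructor
  · intro h m hm hmz
    exact h (m - 1) (by simpa using hm) (by push_cast; rw [hmz]; ring)
  · intro h m hm hmz
    exact h (m + 1) hm (by push_cast; rw [hmz])

theorem existsUnique_missesResidue_shift (h : ∃! z, MissesResidue y n z) :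
    ∃! z, MissesResidue (fun m => y (m + 1)) n z := by
  obtain ⟨z, hz, huniq⟩ := h
  refine ⟨z - 1, missesResidue_shift_iff.mpr (by simpa using hz), fun w hw => ?_⟩
  rw [← huniq (w + 1) (missesResidue_shift_iff.mp hw)]
  ring

end

theorem stmt13_general (b : ℕ → ℕ)
    (φ : (∀ k, ZMod (b k)) → ℤ → Bool)
    (hφ : ∀ ω n, φ ω n = true ↔ ∀ k, ω k + (n : ZMod (b k)) ≠ 0)
    (Y : Set (ℤ → Bool))
    (hY : Y = {y | ∀ k, ∃! z : ZMod (b k), ∀ m : ℤ, y m = true → (m : ZMod (b k)) ≠ z})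
    (θ : (ℤ → Bool) → ∀ k, ZMod (b k))
    (hθ : ∀ y ∈ Y, ∀ k, ∀ m : ℤ, y m = true → (m : ZMod (b k)) ≠ -(θ y k)) :
    ∀ y ∈ Y,
      (∀ k, θ (fun m => y (m + 1)) k = θ y k + 1) ∧
      (∀ m, y m ≤ φ (θ y) m) := by
  subst hY
  intro y hy
  have hSy : (fun m => y (m + 1)) ∈ {y | ∀ k, ∃! z : ZMod (b k), MissesResidue y (b k) z} :=
    fun k => existsUnique_missesResidue_shift (hy k)
  constructor
  · intro k
    -- both `-θ y k` and `-θ (S y) k + 1` are the residue missed by `supp y`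
    have h := (hy k).unique (hθ y hy k)
      (missesResidue_shift_iff.mp (hθ _ hSy k))
    linear_combination h
  · intro m
    cases hm : y m
    · exact Bool.false_le _
    · refine le_of_eq ((hφ _ _).mpr fun k hk => hθ y hy k m hm ?_).symm
      exact eq_neg_of_add_eq_zero_right hk

theorem stmt13 (b : ℕ → ℕ) (hb : ∀ k, 2 ≤ b k)
    (hcop : ∀ i j, i ≠ j → Nat.Coprime (b i) (b j))
    (hsum : Summable fun k => (1 : ℝ) / b k)
    (φ : (∀ k, ZMod (b k)) → ℤ → Bool)
    (hφ : ∀ ω n, φ ω n = true ↔ ∀ k, ω k + (n : ZMod (b k)) ≠ 0)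
    (Y : Set (ℤ → Bool))
    (hY : Y = {y | ∀ k, ∃! z : ZMod (b k), ∀ m : ℤ, y m = true → (m : ZMod (b k)) ≠ z})
    (θ : (ℤ → Bool) → ∀ k, ZMod (b k))
    (hθ : ∀ y ∈ Y, ∀ k, ∀ m : ℤ, y m = true → (m : ZMod (b k)) ≠ -(θ y k)) :
    ∀ y ∈ Y,
      (∀ k, θ (fun m => y (m + 1)) k = θ y k + 1) ∧
      (∀ m, y m ≤ φ (θ y) m) :=
  stmt13_general b φ hφ Y hY θ hθ
end

section
/- Let α be an irrational with all partial quotients bounded by 2 (so ‖kα‖ ≥ 1/(6|k|) for k ≠ 0). If β is a real number with |α − β| < 1/(48n²), then every word of length n occurring in the Sturmian-type sequence x^{(β)} (defined by x^{(β)}(m) = 1 iff {mβ} ∈ [0,1/2)) also occurs in x^{(α)}. -/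
/-! The letter of `x^{(γ)}` at `p` is the parity of `⌊2pγ⌋`. With `z j = 2(ℓ+j)β` and
`w j = 2jα` it suffices to find a shift `v` with `⌊w j + v⌋ = ⌊z j⌋` for all `j < n`, and then to
approximate `v` by `2(mα + K)` using the density of `ℤα + ℤ`. The shifts admissible for `j` form
a unit interval starting at `⌊z j⌋ - w j`. Modulo integers, two of these starting points differ by
`2(k-j)α`, which is at least `1/(12n)` from `ℤ` by the Diophantine bound, up to an error
`2|k-j||α-β| < 1/(24n)`; so all the intervals share a window of length `1/(12n)`. -/

open Finset

theorem Int.fract_lt_half_iff_even_floor_two_mul {R : Type*} [Field R] [LinearOrder R]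
    [IsStrictOrderedRing R] [FloorRing R] (y : R) :
    Int.fract y < 1 / 2 ↔ Even ⌊2 * y⌋ := by
  have hy := Int.fract_add_floor y
  have h0 := Int.fract_nonneg y
  have h1 := Int.fract_lt_one y
  rcases lt_or_ge (Int.fract y) (1 / 2) with h | h
  · have : ⌊2 * y⌋ = 2 * ⌊y⌋ := by
      rw [Int.floor_eq_iff]; push_cast; constructor <;> linarith
    rw [this]; exact iff_of_true h (even_two_mul _)
  · have : ⌊2 * y⌋ = 2 * ⌊y⌋ + 1 := by
      rw [Int.floor_eq_iff]; push_cast; constructor <;> linarith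
    rw [this]; exact iff_of_false h.not_gt (Int.not_even_two_mul_add_one _)

theorem Finset.exists_forall_le_and_le {ι α : Type*} [LinearOrder α] [Nonempty α]
    (t : Finset ι) (a b : ι → α) (h : ∀ j ∈ t, ∀ k ∈ t, a j ≤ b k) :
    ∃ c, ∀ j ∈ t, a j ≤ c ∧ c ≤ b j := by
  rcases t.eq_empty_or_nonempty with rfl | ht
  · exact ⟨Classical.arbitrary α, by simp⟩
  · exact ⟨t.sup' ht a, fun j hj => ⟨le_sup' a hj, sup'_le ht a fun i hi => h i hi j hj⟩⟩

theorem exists_forall_floor_add_eq_floor {ι R : Type*} [Field R] [LinearOrder R]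
    [IsStrictOrderedRing R] [FloorRing R] (t : Finset ι) (z w : ι → R) {ε : R} (hε : ε ≤ 1)
    (hsep : ∀ j ∈ t, ∀ k ∈ t, j ≠ k → ∀ G : ℤ, ε ≤ |w k - w j - G|)
    (hclose : ∀ j ∈ t, ∀ k ∈ t, |(z k - w k) - (z j - w j)| ≤ ε) :
    ∃ c, ∀ v ∈ Set.Ico c (c + ε), ∀ j ∈ t, ⌊w j + v⌋ = ⌊z j⌋ := by
  have hgap : ∀ j ∈ t, ∀ k ∈ t, ⌊z j⌋ - w j ≤ ⌊z k⌋ + 1 - w k - ε := by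
    intro j hj k hk
    rcases eq_or_ne j k with rfl | hjk
    · linarith
    -- `V` is `> -ε` by `hclose`, and `|V| ≥ ε` by `hsep`; hence `V ≥ ε`.
    set V := (⌊z k⌋ + 1 - w k) - (⌊z j⌋ - w j)
    have hV : V = -(w k - w j - ((⌊z k⌋ + 1 - ⌊z j⌋ : ℤ) : R)) := by simp only [V]; push_cast; ring
    have hlarge : ε ≤ |V| := by rw [hV, abs_neg]; exact hsep j hj k hk hjk _
    have hfk := Int.lt_floor_add_one (z k)
    have hfj := Int.floor_le (z j)
    have hneg := neg_abs_le ((z k - w k) - (z j - w j))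
    have hVgt : -ε < V := by linarith [hclose j hj k hk]
    rcases abs_cases V with ⟨h, _⟩ | ⟨h, _⟩ <;> linarith
  obtain ⟨c, hc⟩ := t.exists_forall_le_and_le (fun j => ⌊z j⌋ - w j)
    (fun k => ⌊z k⌋ + 1 - w k - ε) hgap
  refine ⟨c, fun v ⟨hcv, hvc⟩ j hj => ?_⟩
  obtain ⟨hlo, hhi⟩ := hc j hj
  rw [Int.floor_eq_iff]
  constructor <;> linarith

theorem Irrational.exists_int_mul_add_int_mem_Ioo {α a b : ℝ} (hα : Irrational α) (hab : a < b) :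
    ∃ m K : ℤ, (m : ℝ) * α + K ∈ Set.Ioo a b := by
  have hdense := dense_addSubgroupClosure_pair_iff.2 (by rwa [div_one] : Irrational (α / 1))
  obtain ⟨x, hx, hxab⟩ := hdense.exists_between hab
  obtain ⟨m, K, rfl⟩ := AddSubgroup.mem_closure_pair.1 hx
  exact ⟨m, K, by simpa [zsmul_eq_mul] using hxab⟩

theorem one_div_le_abs_two_mul_sub_intCast {α : ℝ}
    (hbound : ∀ k : ℤ, k ≠ 0 →
      1 / (6 * |(k : ℝ)|) ≤ |(k : ℝ) * α - ((round ((k : ℝ) * α) : ℤ) : ℝ)|)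
    {d : ℤ} (hd : d ≠ 0) {N : ℝ} (hdN : |(d : ℝ)| ≤ N) (G : ℤ) :
    1 / (12 * N) ≤ |2 * d * α - G| := by
  have hd' : (0 : ℝ) < |(d : ℝ)| := abs_pos.2 (Int.cast_ne_zero.2 hd)
  calc 1 / (12 * N) ≤ 1 / (6 * |((2 * d : ℤ) : ℝ)|) := by
        push_cast
        rw [abs_mul, abs_two, one_div_le_one_div (by linarith) (by positivity)]
        linarith
    _ ≤ |((2 * d : ℤ) : ℝ) * α - G| :=
        (hbound _ (mul_ne_zero two_ne_zero hd)).trans (round_le _ _)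
    _ = |2 * d * α - G| := by push_cast; ring_nf

theorem exists_forall_floor_two_mul_add_eq {α β : ℝ}
    (hbound : ∀ k : ℤ, k ≠ 0 →
      1 / (6 * |(k : ℝ)|) ≤ |(k : ℝ) * α - ((round ((k : ℝ) * α) : ℤ) : ℝ)|)
    {n : ℕ} (hn : 0 < n) (hβ : |α - β| < 1 / (48 * (n : ℝ) ^ 2)) (ℓ : ℤ) :
    ∃ c : ℝ, ∀ v ∈ Set.Ico c (c + 1 / (12 * n)), ∀ j ∈ range n,
      ⌊2 * ((j : ℝ) * α) + v⌋ = ⌊2 * ((ℓ + j) * β)⌋ := by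
  have hn' : (1 : ℝ) ≤ n := by exact_mod_cast hn
  have hdiff : ∀ j ∈ range n, ∀ k ∈ range n, |(k : ℝ) - j| ≤ n := fun j hj k hk =>
    (abs_sub_lt_of_nonneg_of_lt (Nat.cast_nonneg k) (by simpa using hk) (Nat.cast_nonneg j)
      (by simpa using hj)).le
  have hsep : ∀ j ∈ range n, ∀ k ∈ range n, j ≠ k → ∀ G : ℤ,
      1 / (12 * n) ≤ |2 * ((k : ℝ) * α) - 2 * ((j : ℝ) * α) - G| := by
    intro j hj k hk hjk G
    have := one_div_le_abs_two_mul_sub_intCast hbound (d := k - j) (by omega)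
      (by push_cast; exact hdiff j hj k hk) G
    convert this using 2; push_cast; ring
  have hclose : ∀ j ∈ range n, ∀ k ∈ range n,
      |(2 * ((ℓ + k) * β) - 2 * (k * α)) - (2 * ((ℓ + j) * β) - 2 * (j * α))| ≤ 1 / (12 * n) := by
    intro j hj k hk
    calc _ = |2 * (((k : ℝ) - j) * (β - α))| := by congr 1; ring
      _ = 2 * (|(k : ℝ) - j| * |α - β|) := by rw [abs_mul, abs_mul, abs_two, abs_sub_comm β α]
      _ ≤ 2 * (n * (1 / (48 * (n : ℝ) ^ 2))) :=
          mul_le_mul_of_nonneg_left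
            (mul_le_mul (hdiff j hj k hk) hβ.le (abs_nonneg _) (Nat.cast_nonneg _)) zero_le_two
      _ ≤ 1 / (12 * n) := by field_simp; nlinarith
  exact exists_forall_floor_add_eq_floor (range n) _ _
    (by rw [div_le_one (by positivity)]; linarith) hsep hclose

theorem stmt18 (α β : ℝ) (hirr : Irrational α)
    (hbound : ∀ k : ℤ, k ≠ 0 →
      1 / (6 * |(k : ℝ)|) ≤ |(k : ℝ) * α - ((round ((k : ℝ) * α) : ℤ) : ℝ)|)
    (n : ℕ) (hn : 0 < n) (hβ : |α - β| < 1 / (48 * (n : ℝ) ^ 2)) :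
    ∀ ℓ : ℤ, ∃ m : ℤ, ∀ j : ℕ, j < n →
      (Int.fract (((ℓ : ℝ) + (j : ℝ)) * β) < 1 / 2 ↔
        Int.fract (((m : ℝ) + (j : ℝ)) * α) < 1 / 2) := by
  intro ℓ
  obtain ⟨c, hc⟩ := exists_forall_floor_two_mul_add_eq hbound hn hβ ℓ
  have hε : (0 : ℝ) < 1 / (12 * n) := by positivity
  obtain ⟨m, K, hlo, hhi⟩ :=
    hirr.exists_int_mul_add_int_mem_Ioo (a := c / 2) (b := c / 2 + 1 / (12 * n) / 2) (by linarith)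
  refine ⟨m, fun j hj => ?_⟩
  have hfloor := hc (2 * (m * α + K)) ⟨by linarith, by linarith⟩ j (mem_range.2 hj)
  have hshift : 2 * ((j : ℝ) * α) + 2 * (m * α + K) = 2 * ((m + j) * α) + ((2 * K : ℤ) : ℝ) := by
    push_cast; ring
  rw [Int.fract_lt_half_iff_even_floor_two_mul, Int.fract_lt_half_iff_even_floor_two_mul,
    ← hfloor, hshift, Int.floor_add_intCast]
  simp [Int.even_add]
end

section
/- Let η ∈ {0,1}^ℤ be the indicator of the 𝔅-free numbers for 𝔅 = {b_k} pairwise coprime, ≥ 2, with ∑ 1/b_k < ∞. For every nonempty finite A ⊂ ℤ, the density (with respect to the Mirsky measure / as a limiting frequency along the odometer) of positions n with η(n + a) = 1 for all a ∈ A, computed via the Haar measure ℙ on Ω = ∏ ℤ/b_kℤ, is ℙ({ω : φ(ω)(a) = 1 for all a ∈ A}) = ∏_{k≥1}(1 − |A mod b_k|/b_k). -/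
/-!
The event is `{ω | ∀ k, ω k ∈ T k}` with `T k` the complement of `-A mod b_k`. Its trace on
finitely many coordinates `K` is a disjoint union of `∏_{k ∈ K} #(T k)` point cylinders, each of
mass `∏_{k ∈ K} 1 / b_k`; continuity of `μ` from above along the directed family of finite `K`
is then literally the unconditional convergence of the product to the measure of the event.
-/

open MeasureTheory

noncomputable instance (n : ℕ) : MeasurableSpace (ZMod n) := ⊤

open Finset

lemma Finset.preimage_restrict_singleton_restrict {ι : Type*} {α : ι → Type*} (K : Finset ι)
    (ω : ∀ i, α i) : K.restrict ⁻¹' {K.restrict ω} = {ω' | ∀ i ∈ K, ω' i = ω i} := by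
  ext ω'
  simp [funext_iff]

namespace MeasureTheory

variable {ι : Type*} {α : ι → Type*} [∀ i, MeasurableSpace (α i)]
  [∀ i, MeasurableSingletonClass (α i)] {μ : Measure (∀ i, α i)} {p : ι → ℝ}

lemma measureReal_forall_mem_finset_eq_prod [IsFiniteMeasure μ] [∀ i, Nonempty (α i)]
    (hcyl : ∀ (K : Finset ι) (v : ∀ i, α i), μ.real {ω | ∀ i ∈ K, ω i = v i} = ∏ i ∈ K, p i)
    (K : Finset ι) (T : ∀ i, Finset (α i)) :
    μ.real {ω | ∀ i ∈ K, ω i ∈ T i} = ∏ i ∈ K, #(T i) * p i := by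
  classical
  have hset : {ω | ∀ i ∈ K, ω i ∈ T i} = K.restrict ⁻¹' ↑(Fintype.piFinset fun i : K => T i) := by
    ext; simp
  have hfiber (x : ∀ i : K, α i) : μ.real (K.restrict ⁻¹' {x}) = ∏ i ∈ K, p i := by
    obtain ⟨ω, rfl⟩ := Subtype.surjective_restrict (· ∈ K) x
    exact (preimage_restrict_singleton_restrict K ω).symm ▸ hcyl K ω
  rw [hset, ← sum_measureReal_preimage_singleton _
      fun x _ => K.measurable_restrict (measurableSet_singleton x),
    sum_congr rfl fun x _ => hfiber x, sum_const, Fintype.card_piFinset,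
    prod_coe_sort K fun i => #(T i), nsmul_eq_mul, Nat.cast_prod, prod_mul_distrib]

lemma hasProd_measureReal_forall_mem [Countable ι] [IsFiniteMeasure μ] [∀ i, Nonempty (α i)]
    (hcyl : ∀ (K : Finset ι) (v : ∀ i, α i), μ.real {ω | ∀ i ∈ K, ω i = v i} = ∏ i ∈ K, p i)
    (T : ∀ i, Finset (α i)) :
    HasProd (fun i => #(T i) * p i) (μ.real {ω | ∀ i, ω i ∈ T i}) := by
  set E : Finset ι → Set (∀ i, α i) := fun K => {ω | ∀ i ∈ K, ω i ∈ T i}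
  have hE (K : Finset ι) : MeasurableSet (E K) := by
    simp only [E, Set.ofPred_forall]
    exact .biInter K.countable_toSet fun i _ => measurable_pi_apply i (T i).measurableSet
  have hanti : Antitone E := fun K L hKL ω hω i hi => hω i (hKL hi)
  have hinter : ⋂ K, E K = {ω | ∀ i, ω i ∈ T i} := by
    ext ω
    simp only [E, Set.mem_iInter, Set.mem_ofPred_eq]
    exact ⟨fun h i => h {i} i (mem_singleton_self i), fun h K i _ => h i⟩
  have hlim := (ENNReal.tendsto_toReal (measure_ne_top μ _)).comp
    (tendsto_measure_iInter_atTop (fun K => (hE K).nullMeasurableSet) hanti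
      ⟨∅, measure_ne_top μ _⟩)
  rw [hinter] at hlim
  refine hlim.congr fun K => ?_
  exact measureReal_forall_mem_finset_eq_prod hcyl K T

end MeasureTheory

open scoped Classical in
theorem stmt19_general (b : ℕ → ℕ) (hb : ∀ k, 2 ≤ b k)
    (μ : Measure (∀ k, ZMod (b k))) (hprob : IsProbabilityMeasure μ)
    -- `μ` is the Haar (product of uniform) measure on `Ω = ∏_k ℤ/b_kℤ`:
    (hcyl : ∀ (K : Finset ℕ) (v : ∀ k, ZMod (b k)),
      (μ {ω | ∀ k ∈ K, ω k = v k}).toReal = ∏ k ∈ K, (1 / (b k : ℝ)))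
    (A : Finset ℤ) :
    (μ {ω : ∀ k, ZMod (b k) | ∀ k, ∀ a ∈ A, ω k + ((a : ℤ) : ZMod (b k)) ≠ 0}).toReal
      = ∏' k, (1 - ((A.image (fun a : ℤ => (a : ZMod (b k)))).card : ℝ) / (b k : ℝ)) := by
  have (k : ℕ) : NeZero (b k) := ⟨by have := hb k; omega⟩
  have (n : ℕ) : MeasurableSingletonClass (ZMod n) := ⟨fun _ => trivial⟩
  set T : ∀ k, Finset (ZMod (b k)) :=
    fun k => ((A.image fun a : ℤ => (a : ZMod (b k))).image Neg.neg)ᶜ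
  have hset : {ω : ∀ k, ZMod (b k) | ∀ k, ∀ a ∈ A, ω k + ((a : ℤ) : ZMod (b k)) ≠ 0}
      = {ω | ∀ k, ω k ∈ T k} := by
    ext ω
    simp [T, add_eq_zero_iff_neg_eq']
  rw [hset, ← measureReal_def, ← (hasProd_measureReal_forall_mem hcyl T).tprod_eq]
  refine tprod_congr fun k => ?_
  have hm : #(A.image fun a : ℤ => (a : ZMod (b k))) ≤ b k :=
    (card_le_univ _).trans (ZMod.card (b k)).le
  have hb0 : (b k : ℝ) ≠ 0 := by have := hb k; positivity
  rw [card_compl, card_image_of_injective _ neg_injective, ZMod.card, Nat.cast_sub hm]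
  field_simp

open scoped Classical in
theorem stmt19 (b : ℕ → ℕ) (hb : ∀ k, 2 ≤ b k)
    (hcop : ∀ i j, i ≠ j → Nat.Coprime (b i) (b j))
    (hsum : Summable fun k => (1 : ℝ) / b k)
    (μ : Measure (∀ k, ZMod (b k))) (hprob : IsProbabilityMeasure μ)
    -- `μ` is the Haar (product of uniform) measure on `Ω = ∏_k ℤ/b_kℤ`:
    (hcyl : ∀ (K : Finset ℕ) (v : ∀ k, ZMod (b k)),
      (μ {ω | ∀ k ∈ K, ω k = v k}).toReal = ∏ k ∈ K, (1 / (b k : ℝ)))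
    (A : Finset ℤ) (hA : A.Nonempty) :
    (μ {ω : ∀ k, ZMod (b k) | ∀ k, ∀ a ∈ A, ω k + ((a : ℤ) : ZMod (b k)) ≠ 0}).toReal
      = ∏' k, (1 - ((A.image (fun a : ℤ => (a : ZMod (b k)))).card : ℝ) / (b k : ℝ)) :=
  stmt19_general b hb μ hprob hcyl A
end
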